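/- The caterpillar q-ary tree \hat{T}_n^q, obtained from a path on n+2 vertices by attaching q-2 pendant vertices to each of its n internal vertices, has exactly 2^{q-2}(2^{q-1}-1)^2 (2^{(n-1)(q-2)}-1)/(2^{q-2}-1)^2 - (n-1)/(2^{q-2}-1) + 2^q + nq - 3n + 3 subtrees, for q ≥ 3 and n ≥ 1. -/
import Mathlib

open SimpleGraph

/-- The number of subtrees of a graph `G`. -/
noncomputable def numSubtrees {V : Type*} [Fintype V] (G : SimpleGraph V) : ℕ :=
  {S : Set V | S.Nonempty ∧ (G.induce S).Connected}.ncard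

/-- The caterpillar `q`-ary tree `\hat{T}_n^q`: the path `v_0 v_1 ... v_{n+1}` on `n + 2`
vertices together with `q - 2` pendant vertices attached to each internal vertex
`v_1, ..., v_n` (the leaf `(i, j)` is attached to `v_{i+1}`). -/
def caterpillar (n q : ℕ) : SimpleGraph (Fin (n + 2) ⊕ Fin n × Fin (q - 2)) :=
  SimpleGraph.fromRel (fun x y =>
    match x, y with
    | Sum.inl i, Sum.inl j => (i : ℕ) + 1 = (j : ℕ)
    | Sum.inr (i, _), Sum.inl j => (i : ℕ) + 1 = (j : ℕ)
    | _, _ => False)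

namespace Cat
variable {n q : ℕ}

abbrev Vx (n q : ℕ) := Fin (n + 2) ⊕ Fin n × Fin (q - 2)

lemma adj_ll {i j : Fin (n+2)} :
    (caterpillar n q).Adj (Sum.inl i) (Sum.inl j) ↔ ((i:ℕ)+1 = j ∨ (j:ℕ)+1 = i) := by
  rw [caterpillar, fromRel_adj]
  constructor
  · rintro ⟨-, h⟩; exact h
  · intro h
    refine ⟨fun he => ?_, h⟩
    rw [Sum.inl.injEq] at he
    have : (i:ℕ) = j := by rw [he]
    omega

lemma adj_rl {p : Fin n × Fin (q-2)} {j : Fin (n+2)} :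
    (caterpillar n q).Adj (Sum.inr p) (Sum.inl j) ↔ (p.1:ℕ)+1 = j := by
  obtain ⟨i, c⟩ := p
  rw [caterpillar, fromRel_adj]
  simp only [Sum.inr_ne_inl ..]
  constructor
  · rintro ⟨-, h | h⟩
    · exact h
    · exact h.elim
  · intro h; exact ⟨by simp, Or.inl h⟩

lemma adj_lr {p : Fin n × Fin (q-2)} {j : Fin (n+2)} :
    (caterpillar n q).Adj (Sum.inl j) (Sum.inr p) ↔ (p.1:ℕ)+1 = j := by
  rw [adj_comm]; exact adj_rl

lemma not_adj_rr {p p' : Fin n × Fin (q-2)} :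
    ¬ (caterpillar n q).Adj (Sum.inr p) (Sum.inr p') := by
  obtain ⟨i, c⟩ := p
  obtain ⟨i', c'⟩ := p'
  rw [caterpillar, fromRel_adj]
  rintro ⟨-, h | h⟩ <;> exact h

end Cat

namespace Cat
variable {n q : ℕ}

def ix : Vx n q → ℕ
  | Sum.inl i => i
  | Sum.inr p => (p.1 : ℕ) + 1

lemma ix_adj {x y : Vx n q} (h : (caterpillar n q).Adj x y) :
    ix y ≤ ix x + 1 ∧ ix x ≤ ix y + 1 := by
  rcases x with i | p <;> rcases y with j | p'
  · rw [adj_ll] at h; simp [ix]; omega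
  · rw [adj_lr] at h; simp [ix]; omega
  · rw [adj_rl] at h; simp [ix]; omega
  · exact absurd h not_adj_rr

lemma adj_inr_eq {p : Fin n × Fin (q-2)} {y : Vx n q}
    (h : (caterpillar n q).Adj (Sum.inr p) y) :
    y = Sum.inl ⟨(p.1:ℕ)+1, by omega⟩ := by
  rcases y with j | p'
  · rw [adj_rl] at h
    congr 1
    exact Fin.ext h.symm
  · exact absurd h not_adj_rr

def build (a b : Fin (n+2)) (L : Set (Fin n × Fin (q-2))) : Set (Vx n q) :=
  Sum.inl '' Set.Icc a b ∪ Sum.inr '' L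

lemma mem_build_inl {a b : Fin (n+2)} {L : Set (Fin n × Fin (q-2))} {i : Fin (n+2)} :
    Sum.inl i ∈ build a b L ↔ a ≤ i ∧ i ≤ b := by
  simp [build, Set.mem_Icc]

lemma mem_build_inr {a b : Fin (n+2)} {L : Set (Fin n × Fin (q-2))} {p : Fin n × Fin (q-2)} :
    Sum.inr p ∈ build a b L ↔ p ∈ L := by
  simp [build]

lemma singleton_connected (v : Vx n q) : ((caterpillar n q).induce {v}).Connected := by
  rw [connected_iff]
  refine ⟨fun u w => ?_, ⟨⟨v, rfl⟩⟩⟩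
  have : u = w := Subtype.ext (u.2.trans w.2.symm)
  exact this ▸ Reachable.refl u

lemma build_connected {a b : Fin (n+2)} (hab : a ≤ b) {L : Set (Fin n × Fin (q-2))}
    (hL : ∀ p ∈ L, (a:ℕ) ≤ (p.1:ℕ)+1 ∧ (p.1:ℕ)+1 ≤ (b:ℕ)) :
    ((caterpillar n q).induce (build a b L)).Connected := by
  have ha : Sum.inl a ∈ build a b L := mem_build_inl.2 ⟨le_refl a, hab⟩
  rw [connected_iff]
  refine ⟨fun u v => ?_, ⟨⟨_, ha⟩⟩⟩
  have key : ∀ (m : ℕ) (i : Fin (n+2)) (h1 : a ≤ i) (h2 : i ≤ b), (i:ℕ) = (a:ℕ) + m →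
      ((caterpillar n q).induce (build a b L)).Reachable ⟨Sum.inl a, ha⟩
        ⟨Sum.inl i, mem_build_inl.2 ⟨h1, h2⟩⟩ := by
    intro m
    induction m with
    | zero =>
      intro i h1 h2 hm
      have : i = a := Fin.ext (by omega)
      subst this
      exact Reachable.refl _
    | succ m ih =>
      intro i h1 h2 hm
      have hjlt : (a:ℕ) + m < n + 2 := by omega
      set j : Fin (n+2) := ⟨(a:ℕ) + m, hjlt⟩ with hj
      have hj1 : a ≤ j := by rw [Fin.le_def]; simp [hj]
      have hj2 : j ≤ b := by
        rw [Fin.le_def] at h2 ⊢; simp [hj]; omega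
      have hr := ih j hj1 hj2 (by simp [hj])
      refine hr.trans (Adj.reachable ?_)
      show (caterpillar n q).Adj (Sum.inl j) (Sum.inl i)
      exact adj_ll.2 (Or.inl (by simp [hj]; omega))
  have reach : ∀ (w : ↥(build a b L)),
      ((caterpillar n q).induce (build a b L)).Reachable ⟨Sum.inl a, ha⟩ w := by
    rintro ⟨w, hw⟩
    rcases w with i | p
    · have h := mem_build_inl.1 hw
      have := key ((i:ℕ) - a) i h.1 h.2 (by have := Fin.le_def.1 h.1; omega)
      exact this
    · have hp : p ∈ L := mem_build_inr.1 hw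
      obtain ⟨h1, h2⟩ := hL p hp
      have hjlt : (p.1:ℕ) + 1 < n + 2 := by omega
      set j : Fin (n+2) := ⟨(p.1:ℕ)+1, hjlt⟩ with hj
      have hj1 : a ≤ j := by rw [Fin.le_def]; simp [hj]; omega
      have hj2 : j ≤ b := by rw [Fin.le_def]; simp [hj]; omega
      have hr := key ((j:ℕ) - a) j hj1 hj2 (by have := Fin.le_def.1 hj1; omega)
      refine hr.trans (Adj.reachable ?_)
      show (caterpillar n q).Adj (Sum.inl j) (Sum.inr p)
      exact adj_lr.2 (by simp [hj])
  exact (reach u).symm.trans (reach v)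

end Cat

namespace Cat
variable {n q : ℕ}

lemma walk_barrier {S : Set (Vx n q)} (c : ℕ) (hc : ∀ x ∈ S, ix x ≠ c)
    {u v : ↥S} (w : ((caterpillar n q).induce S).Walk u v) (hu : ix u.1 < c) :
    ix v.1 < c := by
  induction w with
  | nil => exact hu
  | @cons a x v h p ih =>
    have hadj : (caterpillar n q).Adj a.1 x.1 := h
    have hb := ix_adj hadj
    have hne := hc x.1 x.2
    exact ih (by omega)

lemma first_step {S : Set (Vx n q)} {u v : ↥S}
    (w : ((caterpillar n q).induce S).Walk u v) (hne : u ≠ v) :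
    ∃ x : ↥S, ((caterpillar n q).induce S).Adj u x := by
  cases w with
  | nil => exact absurd rfl hne
  | cons h p => exact ⟨_, h⟩

lemma leaf_step {S : Set (Vx n q)} (hconn : ((caterpillar n q).induce S).Connected)
    {p : Fin n × Fin (q-2)} (hp : Sum.inr p ∈ S) {w : Vx n q} (hw : w ∈ S)
    (hne : w ≠ Sum.inr p) :
    Sum.inl (⟨(p.1:ℕ)+1, by omega⟩ : Fin (n+2)) ∈ S := by
  obtain ⟨walk⟩ := hconn.preconnected ⟨_, hp⟩ ⟨w, hw⟩
  obtain ⟨x, hx⟩ := first_step walk (fun h => hne (congrArg Subtype.val h).symm)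
  have hadj : (caterpillar n q).Adj (Sum.inr p) x.1 := hx
  have heq := adj_inr_eq hadj
  have hx2 := x.2
  rw [heq] at hx2
  exact hx2

lemma shape {S : Set (Vx n q)} (hne : S.Nonempty)
    (hconn : ((caterpillar n q).induce S).Connected) :
    (∃ p, S = {Sum.inr p}) ∨
    (∃ a b : Fin (n+2), a ≤ b ∧ ∃ L : Set (Fin n × Fin (q-2)),
      (∀ p ∈ L, (a:ℕ) ≤ (p.1:ℕ)+1 ∧ (p.1:ℕ)+1 ≤ (b:ℕ)) ∧ S = build a b L) := by
  classical
  by_cases hpath : ∃ i : Fin (n+2), Sum.inl i ∈ S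
  · right
    set P : Finset (Fin (n+2)) := Finset.univ.filter (fun i => Sum.inl i ∈ S) with hP
    have hPne : P.Nonempty := ⟨hpath.choose, by simp [hP, hpath.choose_spec]⟩
    set a := P.min' hPne with hadef
    set b := P.max' hPne with hbdef
    have haS : Sum.inl a ∈ S := by have := P.min'_mem hPne; simpa [hP] using this
    have hbS : Sum.inl b ∈ S := by have := P.max'_mem hPne; simpa [hP] using this
    have hmin : ∀ i, Sum.inl i ∈ S → a ≤ i := fun i hi => P.min'_le i (by simp [hP, hi])
    have hmax : ∀ i, Sum.inl i ∈ S → i ≤ b := fun i hi => P.le_max' i (by simp [hP, hi])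
    have hab : a ≤ b := hmin b hbS
    have hatt : ∀ p : Fin n × Fin (q-2), Sum.inr p ∈ S →
        Sum.inl (⟨(p.1:ℕ)+1, by omega⟩ : Fin (n+2)) ∈ S := by
      intro p hp
      exact leaf_step hconn hp haS (by simp)
    have hint : ∀ i : Fin (n+2), a ≤ i → i ≤ b → Sum.inl i ∈ S := by
      intro i h1 h2
      by_contra hiS
      have hbar : ∀ x ∈ S, ix x ≠ (i:ℕ) := by
        rintro (j | p) hx
        · intro hji
          exact hiS (by rwa [show j = i from Fin.ext hji] at hx)
        · intro hpi
          have hmem := hatt p hx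
          have heq : (⟨(p.1:ℕ)+1, by omega⟩ : Fin (n+2)) = i := Fin.ext hpi
          exact hiS (heq ▸ hmem)
      have halt : (a:ℕ) < (i:ℕ) := by
        have h1' := Fin.le_def.1 h1
        rcases Nat.eq_or_lt_of_le h1' with h | h
        · exact absurd haS (by rw [show a = i from Fin.ext h]; exact hiS)
        · exact h
      obtain ⟨w⟩ := hconn.preconnected ⟨_, haS⟩ ⟨_, hbS⟩
      have hwb : (b:ℕ) < (i:ℕ) := walk_barrier (i:ℕ) hbar w halt
      have := Fin.le_def.1 h2
      omega
    refine ⟨a, b, hab, {p | Sum.inr p ∈ S}, ?_, ?_⟩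
    · intro p hp
      have hmem := hatt p hp
      have h1 := Fin.le_def.1 (hmin _ hmem)
      have h2 := Fin.le_def.1 (hmax _ hmem)
      exact ⟨by simpa using h1, by simpa using h2⟩
    · ext x
      rcases x with i | p
      · rw [mem_build_inl]
        exact ⟨fun h => ⟨hmin i h, hmax i h⟩, fun ⟨h1, h2⟩ => hint i h1 h2⟩
      · rw [mem_build_inr]; rfl
  · left
    push_neg at hpath
    obtain ⟨v, hv⟩ := hne
    rcases v with i | p
    · exact absurd hv (hpath i)
    · refine ⟨p, ?_⟩
      ext w
      simp only [Set.mem_singleton_iff]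
      constructor
      · intro hw
        by_contra hne'
        exact hpath _ (leaf_step hconn hv hw hne')
      · rintro rfl; exact hv

end Cat

namespace Cat
variable {n q : ℕ}

def att (n q : ℕ) (a b : Fin (n+2)) : Finset (Fin n × Fin (q-2)) :=
  Finset.univ.filter (fun r => (a:ℕ) ≤ (r.1:ℕ)+1 ∧ (r.1:ℕ)+1 ≤ (b:ℕ))

abbrev Pairs (n : ℕ) := {p : Fin (n+2) × Fin (n+2) // p.1 ≤ p.2}

abbrev Enc (n q : ℕ) := (Fin n × Fin (q-2)) ⊕ (Σ p : Pairs n, Finset {r // r ∈ att n q p.1.1 p.1.2})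

def enc : Enc n q → Set (Vx n q)
  | Sum.inl r => {Sum.inr r}
  | Sum.inr ⟨p, L⟩ => build p.1.1 p.1.2 (Subtype.val '' (L : Set {r // r ∈ att n q p.1.1 p.1.2}))

lemma att_prop {a b : Fin (n+2)} {r : Fin n × Fin (q-2)} (h : r ∈ att n q a b) :
    (a:ℕ) ≤ (r.1:ℕ)+1 ∧ (r.1:ℕ)+1 ≤ (b:ℕ) := by
  simpa [att] using h

lemma enc_injective : Function.Injective (enc (n := n) (q := q)) := by
  rintro (r | ⟨p, L⟩) (r' | ⟨p', L'⟩) h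
  · simp only [enc, Set.singleton_eq_singleton_iff, Sum.inr.injEq] at h
    rw [h]
  · exfalso
    have hmem : Sum.inl p'.1.1 ∈ enc (Sum.inr ⟨p', L'⟩ : Enc n q) :=
      mem_build_inl.2 ⟨le_refl _, p'.2⟩
    rw [← h] at hmem
    simp [enc] at hmem
  · exfalso
    have hmem : Sum.inl p.1.1 ∈ enc (Sum.inr ⟨p, L⟩ : Enc n q) :=
      mem_build_inl.2 ⟨le_refl _, p.2⟩
    rw [h] at hmem
    simp [enc] at hmem
  · simp only [enc] at h
    have hiff : ∀ i : Fin (n+2), (p.1.1 ≤ i ∧ i ≤ p.1.2) ↔ (p'.1.1 ≤ i ∧ i ≤ p'.1.2) := by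
      intro i
      constructor
      · intro hi; exact mem_build_inl.1 (h ▸ mem_build_inl.2 hi)
      · intro hi; exact mem_build_inl.1 (h.symm ▸ mem_build_inl.2 hi)
    have ha : p.1.1 = p'.1.1 := by
      have h1 := (hiff p.1.1).1 ⟨le_refl _, p.2⟩
      have h2 := (hiff p'.1.1).2 ⟨le_refl _, p'.2⟩
      exact le_antisymm h2.1 h1.1
    have hb : p.1.2 = p'.1.2 := by
      have h1 := (hiff p.1.2).1 ⟨p.2, le_refl _⟩
      have h2 := (hiff p'.1.2).2 ⟨p'.2, le_refl _⟩
      exact le_antisymm h1.2 h2.2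
    have hp : p = p' := Subtype.ext (Prod.ext ha hb)
    subst hp
    have hLiff : ∀ r : Fin n × Fin (q-2),
        r ∈ Subtype.val '' (↑L : Set {r // r ∈ att n q p.1.1 p.1.2}) ↔
        r ∈ Subtype.val '' (↑L' : Set {r // r ∈ att n q p.1.1 p.1.2}) := by
      intro r
      constructor
      · intro hr; exact mem_build_inr.1 (h ▸ mem_build_inr.2 hr)
      · intro hr; exact mem_build_inr.1 (h.symm ▸ mem_build_inr.2 hr)
    have hLL : L = L' := by
      ext x
      constructor
      · intro hx
        obtain ⟨y, hy, hyx⟩ := (hLiff x.1).1 ⟨x, by simpa using hx, rfl⟩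
        rwa [← Subtype.ext hyx]
      · intro hx
        obtain ⟨y, hy, hyx⟩ := (hLiff x.1).2 ⟨x, by simpa using hx, rfl⟩
        rwa [← Subtype.ext hyx]
    rw [hLL]

lemma enc_range : Set.range (enc (n := n) (q := q)) =
    {S : Set (Vx n q) | S.Nonempty ∧ ((caterpillar n q).induce S).Connected} := by
  classical
  ext S
  constructor
  · rintro ⟨e, rfl⟩
    rcases e with r | ⟨p, L⟩
    · exact ⟨⟨_, rfl⟩, singleton_connected _⟩
    · refine ⟨⟨Sum.inl p.1.1, mem_build_inl.2 ⟨le_refl _, p.2⟩⟩, ?_⟩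
      refine build_connected p.2 ?_
      rintro r ⟨y, hy, rfl⟩
      exact att_prop y.2
  · rintro ⟨hne, hconn⟩
    rcases shape hne hconn with ⟨p, rfl⟩ | ⟨a, b, hab, L, hL, rfl⟩
    · exact ⟨Sum.inl p, rfl⟩
    · set F := (Set.toFinite {x : {r // r ∈ att n q a b} | x.1 ∈ L}).toFinset with hF
      refine ⟨Sum.inr ⟨⟨(a, b), hab⟩, F⟩, ?_⟩
      show build a b (Subtype.val '' (↑F : Set {r // r ∈ att n q a b})) = build a b L
      have himg : Subtype.val '' (↑F : Set {r // r ∈ att n q a b}) = L := by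
        ext r
        simp only [Set.mem_image, Finset.mem_coe, hF, Set.Finite.mem_toFinset, Set.mem_setOf_eq]
        constructor
        · rintro ⟨y, hy, rfl⟩
          exact hy
        · intro hr
          have hratt : r ∈ att n q a b := by
            simp only [att, Finset.mem_filter, Finset.mem_univ, true_and]
            exact hL r hr
          exact ⟨⟨r, hratt⟩, hr, rfl⟩
      rw [himg]

end Cat

namespace Cat
variable {n q : ℕ}

set_option maxHeartbeats 1000000 in
lemma count_eq : numSubtrees (caterpillar n q) =
    n * (q - 2) + ∑ p : Pairs n, 2 ^ (att n q p.1.1 p.1.2).card := by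
  classical
  rw [numSubtrees, ← enc_range, ← Nat.card_coe_set_eq,
    Nat.card_range_of_injective enc_injective, Nat.card_eq_fintype_card]
  rw [Fintype.card_sum, Fintype.card_prod, Fintype.card_fin, Fintype.card_fin,
    Fintype.card_sigma]
  congr 1
  refine Finset.sum_congr rfl fun p _ => ?_
  rw [Fintype.card_finset, Fintype.card_coe]

lemma att_card {a b : Fin (n+2)} :
    (att n q a b).card = (q - 2) * (min (b:ℕ) n + 1 - max (a:ℕ) 1) := by
  classical
  have hsplit : att n q a b =
      (Finset.univ.filter (fun i : Fin n => (a:ℕ) ≤ (i:ℕ)+1 ∧ (i:ℕ)+1 ≤ (b:ℕ))) ×ˢ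
      (Finset.univ : Finset (Fin (q-2))) := by
    ext r
    simp [att, Finset.mem_product]
  rw [hsplit, Finset.card_product, Finset.card_univ, Fintype.card_fin]
  rw [Nat.mul_comm]
  congr 1
  have h1 : (Finset.univ.filter (fun i : Fin n => (a:ℕ) ≤ (i:ℕ)+1 ∧ (i:ℕ)+1 ≤ (b:ℕ))).card
      = ((Finset.range n).filter (fun j => (a:ℕ) ≤ j+1 ∧ j+1 ≤ (b:ℕ))).card := by
    rw [Finset.card_filter, Finset.card_filter]
    exact Fin.sum_univ_eq_sum_range (fun j => if (a:ℕ) ≤ j+1 ∧ j+1 ≤ (b:ℕ) then 1 else 0) n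
  rw [h1]
  have h2 : (Finset.range n).filter (fun j => (a:ℕ) ≤ j+1 ∧ j+1 ≤ (b:ℕ))
      = Finset.Ico (max (a:ℕ) 1 - 1) (min (b:ℕ) n) := by
    ext j
    simp only [Finset.mem_filter, Finset.mem_range, Finset.mem_Ico]
    omega
  rw [h2, Nat.card_Ico]
  omega

lemma sum_pairs : (∑ p : Pairs n, 2 ^ (att n q p.1.1 p.1.2).card) =
    ∑ a ∈ Finset.range (n+2), ∑ b ∈ Finset.range (n+2),
      if a ≤ b then 2 ^ ((q - 2) * (min b n + 1 - max a 1)) else 0 := by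
  classical
  have h := Finset.sum_subtype (p := fun p : Fin (n+2) × Fin (n+2) => p.1 ≤ p.2)
      (F := inferInstance)
      (Finset.univ.filter (fun p : Fin (n+2) × Fin (n+2) => p.1 ≤ p.2))
      (fun x => by simp)
      (fun p => 2 ^ ((q - 2) * (min (p.2:ℕ) n + 1 - max (p.1:ℕ) 1)))
  simp only [att_card]
  rw [← h, Finset.sum_filter, Fintype.sum_prod_type]
  simp only [Fin.le_def]
  rw [Fin.sum_univ_eq_sum_range (fun av => ∑ b : Fin (n+2),
    if av ≤ (b:ℕ) then 2 ^ ((q - 2) * (min (b:ℕ) n + 1 - max av 1)) else 0) (n+2)]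
  refine Finset.sum_congr rfl fun a _ => ?_
  exact Fin.sum_univ_eq_sum_range
    (fun bv => if a ≤ bv then 2 ^ ((q - 2) * (min bv n + 1 - max a 1)) else 0) (n+2)

end Cat

namespace Cat

lemma rsum (x : ℚ) (hx : x ≠ 1) (m : ℕ) :
    (∑ a ∈ Finset.range m, x^(m-a)) = x*(x^m-1)/(x-1) := by
  have h1 : ∀ a ∈ Finset.range m, x^(m-a) = (fun j => x^(j+1)) (m-1-a) := by
    intro a ha; rw [Finset.mem_range] at ha; simp only; congr 1; omega
  rw [Finset.sum_congr rfl h1, Finset.sum_range_reflect (fun j => x^(j+1)) m]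
  have h2 : ∑ j ∈ Finset.range m, x^(j+1) = x * ∑ j ∈ Finset.range m, x^j := by
    rw [Finset.mul_sum]; exact Finset.sum_congr rfl fun j _ => by ring
  rw [h2, geom_sum_eq hx, mul_div_assoc]

lemma dsum (x : ℚ) (hx : x ≠ 1) (m : ℕ) :
    (∑ a ∈ Finset.range m, ∑ k ∈ Finset.range (m-a), x^k)
      = ((x^(m+1) - x)/(x-1) - m)/(x-1) := by
  induction m with
  | zero => simp
  | succ m ih =>
    rw [Finset.sum_range_succ']
    simp only [Nat.succ_sub_succ, Nat.sub_zero]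
    rw [ih, geom_sum_eq hx]
    have hx1 : x - 1 ≠ 0 := sub_ne_zero.2 hx
    field_simp
    push_cast
    ring

lemma eval (x : ℚ) (hx : x ≠ 1) (n : ℕ) :
    (∑ a ∈ Finset.range (n+2), ∑ b ∈ Finset.range (n+2),
      if a ≤ b then x ^ (min b n + 1 - max a 1) else 0)
    = 1 + ((x^(n+1)-1)/(x-1) + x^n) + x*(x^n-1)/(x-1)
      + x * (((x^(n+1) - x)/(x-1) - n)/(x-1)) := by
  rw [Finset.sum_range_succ]
  have hlast : (∑ b ∈ Finset.range (n+2), if n+1 ≤ b then x ^ (min b n + 1 - max (n+1) 1) else 0) = 1 := by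
    rw [Finset.sum_range_succ]
    rw [Finset.sum_eq_zero (fun b hb => by
      rw [Finset.mem_range] at hb; rw [if_neg (by omega)])]
    rw [if_pos (le_refl _)]
    have h : min (n+1) n + 1 - max (n+1) 1 = 0 := by omega
    rw [h, pow_zero, zero_add]
  rw [hlast, Finset.sum_range_succ']
  have h0 : (∑ b ∈ Finset.range (n+2), if 0 ≤ b then x ^ (min b n + 1 - max 0 1) else 0)
      = (x^(n+1)-1)/(x-1) + x^n := by
    have h : ∀ b ∈ Finset.range (n+2),
        (if 0 ≤ b then x ^ (min b n + 1 - max 0 1) else 0) = x ^ (min b n) := by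
      intro b hb; rw [if_pos (Nat.zero_le b)]; congr 1 <;> omega
    rw [Finset.sum_congr rfl h, Finset.sum_range_succ]
    have h2 : ∀ b ∈ Finset.range (n+1), x ^ (min b n) = x ^ b := by
      intro b hb; rw [Finset.mem_range] at hb; congr 1; omega
    rw [Finset.sum_congr rfl h2, geom_sum_eq hx]
    have h3 : min (n+1) n = n := by omega
    rw [h3]
  rw [h0]
  have hmid : ∀ a ∈ Finset.range n,
      (∑ b ∈ Finset.range (n+2), if a+1 ≤ b then x ^ (min b n + 1 - max (a+1) 1) else 0)
      = x^(n-a) + x * ∑ k ∈ Finset.range (n-a), x^k := by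
    intro a ha; rw [Finset.mem_range] at ha
    rw [Finset.sum_range_succ, if_pos (by omega)]
    have he1 : min (n+1) n + 1 - max (a+1) 1 = n - a := by omega
    rw [he1]
    have he2 : ∀ b ∈ Finset.range (n+1),
        (if a+1 ≤ b then x ^ (min b n + 1 - max (a+1) 1) else 0)
        = (if a+1 ≤ b then x^(b-a) else 0) := by
      intro b hb; rw [Finset.mem_range] at hb
      by_cases h : a+1 ≤ b
      · rw [if_pos h, if_pos h]; congr 1; omega
      · rw [if_neg h, if_neg h]
    rw [Finset.sum_congr rfl he2, ← Finset.sum_filter]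
    have hfil : (Finset.range (n+1)).filter (fun b => a+1 ≤ b) = Finset.Ico (a+1) (n+1) := by
      ext b; simp [Finset.mem_Ico]; omega
    rw [hfil, Finset.sum_Ico_eq_sum_range]
    have he3 : n + 1 - (a+1) = n - a := by omega
    rw [he3]
    have he4 : ∀ k ∈ Finset.range (n-a), x ^ (a+1+k-a) = x * x^k := by
      intro k hk
      have h : a+1+k-a = k+1 := by omega
      rw [h, pow_succ]; ring
    rw [Finset.sum_congr rfl he4, ← Finset.mul_sum]
    ring
  rw [Finset.sum_congr rfl hmid, Finset.sum_add_distrib, ← Finset.mul_sum]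
  rw [rsum x hx n, dsum x hx n]
  ring

end Cat

theorem numSubtrees_caterpillar (n q : ℕ) (hq : 3 ≤ q) (hn : 1 ≤ n) :
    (numSubtrees (caterpillar n q) : ℚ) =
      2 ^ (q - 2) * (2 ^ (q - 1) - 1) ^ 2 * (2 ^ ((n - 1) * (q - 2)) - 1) /
          (2 ^ (q - 2) - 1) ^ 2
        - (n - 1) / (2 ^ (q - 2) - 1) + 2 ^ q + n * q - 3 * n + 3 := by
  obtain ⟨s, rfl⟩ : ∃ s, q = s + 2 := ⟨q - 2, by omega⟩
  obtain ⟨m, rfl⟩ : ∃ m, n = m + 1 := ⟨n - 1, by omega⟩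
  have hs : 1 ≤ s := by omega
  have hx2 : (1:ℚ) < 2^s := one_lt_pow₀ (by norm_num) (by omega)
  have hx1 : ((2:ℚ)^s) ≠ 1 := by linarith
  rw [Cat.count_eq, Cat.sum_pairs]
  simp only [Nat.add_sub_cancel, show s+2-1 = s+1 from by omega, show m+1-1 = m from by omega]
  push_cast [pow_mul]
  rw [Cat.eval ((2:ℚ)^s) hx1 (m+1)]
  have h42 : (2:ℚ)^(s+2) = 4 * 2^s := by rw [pow_add]; ring
  rw [h42]
  rw [show (2:ℚ)^(s+1) = 2^s * 2 from pow_succ 2 s]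
  rw [show ((2:ℚ)^m)^s = ((2:ℚ)^s)^m from by rw [← pow_mul, mul_comm, pow_mul]]
  simp only [pow_succ]
  have hX1 : ((2:ℚ)^s) - 1 ≠ 0 := sub_ne_zero.2 hx1
  push_cast
  field_simp
  ring
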